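/- arXiv:1302.6291 — 2 statements merged into one kernel-verified Lean document; each statement's English description precedes it below -/
import Mathlib

section
/- Let S be a generalized left-symmetric algebra over a field k with commutation factor ε on an abelian group Γ, and let M be an S-bimodule, i.e., a Γ-graded space with left action (x,m) ↦ x·m and right action (m,x) ↦ m·x of degree-compatible type satisfying (x·y)·m − x·(y·m) = ε(α,β)((y·x)·m − y·(x·m)) and (x·m)·y − x·(m·y) = ε(α,γ)((m·x)·y − m·(x·y)) for x ∈ S_α, y ∈ S_β, m ∈ M_γ. Then C¹(S,M) = Hom(S,M) = ⊕_γ Hom_γ(S,M), equipped with the left action (x·f)(y) := x·f(y) − ε(α,γ)f(x·y) + ε(α,γ)f(x)·y for x ∈ S_α, f ∈ Hom_γ(S,M), and the zero right action, is an antisymmetric S-bimodule (i.e., it satisfies the first bimodule identity (x·y)·f − x·(y·f) = ε(α,β)((y·x)·f − y·(x·f))). -/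
/-!
Evaluated at `z`, the difference `(x·y)·f − x·(y·f) − ε(α,β)((y·x)·f − y·(x·f))` splits into
four groups of terms, each vanishing by one hypothesis: the first bimodule identity of `M` at
`f(z)`, the left-symmetric identity of `S` pushed through `f`, and the second bimodule identity
at `(x, f(y))` and at `(y, f(x))`. Besides bimultiplicativity, the only property of `ε` involved
is `ε(α,β) ε(β,α+γ) = ε(β,γ)`, since `x·f` has degree `α+γ`.
-/

def IsCommutationFactor {k Γ : Type*} [Field k] [AddCommGroup Γ] (ε : Γ → Γ → k) : Prop :=
  (∀ α β, ε α β * ε β α = 1) ∧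
  (∀ α β γ, ε α (β + γ) = ε α β * ε α γ) ∧
  (∀ α β γ, ε (α + β) γ = ε α γ * ε β γ)

/-- The left action of a homogeneous `x ∈ S_α` on a homogeneous map `f ∈ Hom_γ(S,M)`:
`(x·f)(y) = x·f(y) − ε(α,γ) f(x·y) + ε(α,γ) f(x)·y`. -/
def c1Act {k Γ S M : Type*} [Field k] [AddCommGroup Γ] [AddCommGroup S] [Module k S]
    [AddCommGroup M] [Module k M] (ε : Γ → Γ → k) (mul : S →ₗ[k] S →ₗ[k] S)
    (l : S →ₗ[k] M →ₗ[k] M) (r : M →ₗ[k] S →ₗ[k] M)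
    (α γ : Γ) (x : S) (f : S → M) : S → M :=
  fun y => l x (f y) - ε α γ • f (mul x y) + ε α γ • r (f x) y

namespace IsCommutationFactor

variable {k Γ : Type*} [Field k] [AddCommGroup Γ] {ε : Γ → Γ → k}

theorem mul_swap (hε : IsCommutationFactor ε) (α β : Γ) : ε α β * ε β α = 1 :=
  hε.1 α β

theorem apply_add_right (hε : IsCommutationFactor ε) (α β γ : Γ) :
    ε α (β + γ) = ε α β * ε α γ :=
  hε.2.1 α β γ

theorem apply_add_left (hε : IsCommutationFactor ε) (α β γ : Γ) :
    ε (α + β) γ = ε α γ * ε β γ :=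
  hε.2.2 α β γ

theorem mul_apply_swap_add (hε : IsCommutationFactor ε) (α β γ : Γ) :
    ε α β * ε β (α + γ) = ε β γ := by
  rw [hε.apply_add_right, ← mul_assoc, hε.mul_swap, one_mul]

end IsCommutationFactor

theorem stmt4_general {k Γ S M : Type*} [Field k] [AddCommGroup Γ]
    [AddCommGroup S] [Module k S] [AddCommGroup M] [Module k M]
    (ε : Γ → Γ → k) (𝒜 : Γ → Submodule k S) (ℳ : Γ → Submodule k M)
    (mul : S →ₗ[k] S →ₗ[k] S) (l : S →ₗ[k] M →ₗ[k] M) (r : M →ₗ[k] S →ₗ[k] M)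
    (hε : IsCommutationFactor ε)
    (hlsi : ∀ ⦃α β : Γ⦄ ⦃x y : S⦄ (z : S), x ∈ 𝒜 α → y ∈ 𝒜 β →
      mul (mul x y) z - mul x (mul y z) = ε α β • (mul (mul y x) z - mul y (mul x z)))
    (hbm1 : ∀ ⦃α β : Γ⦄ ⦃x y : S⦄ (m : M), x ∈ 𝒜 α → y ∈ 𝒜 β →
      l (mul x y) m - l x (l y m) = ε α β • (l (mul y x) m - l y (l x m)))
    (hbm2 : ∀ ⦃α γ : Γ⦄ ⦃x : S⦄ ⦃m : M⦄ (y : S), x ∈ 𝒜 α → m ∈ ℳ γ →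
      r (l x m) y - l x (r m y) = ε α γ • (r (r m x) y - r m (mul x y)))
    {α β γ : Γ} {x y : S} (hx : x ∈ 𝒜 α) (hy : y ∈ 𝒜 β)
    (f : S →ₗ[k] M) (hf : ∀ ⦃δ : Γ⦄ ⦃s : S⦄, s ∈ 𝒜 δ → f s ∈ ℳ (δ + γ)) :
    ∀ z : S,
      c1Act ε mul l r (α + β) γ (mul x y) ⇑f z -
        c1Act ε mul l r α (β + γ) x (c1Act ε mul l r β γ y ⇑f) z =
      ε α β • (c1Act ε mul l r (α + β) γ (mul y x) ⇑f z -
        c1Act ε mul l r β (α + γ) y (c1Act ε mul l r α γ x ⇑f) z) := by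
  intro z
  have hbm1z := hbm1 (f z) hx hy
  have hlsi_f := congrArg f (hlsi z hx hy)
  simp only [map_sub, map_smul] at hlsi_f
  have hbm2x := hbm2 z hx (hf hy)
  rw [hε.apply_add_right α β γ] at hbm2x
  have hbm2y : ε α β • (r (l y (f x)) z - l y (r (f x) z)) =
      ε β γ • (r (r (f x) y) z - r (f x) (mul y z)) := by
    rw [hbm2 z hy (hf hx), smul_smul, hε.mul_apply_swap_add]
  simp only [c1Act, map_sub, map_add, map_smul, LinearMap.sub_apply, LinearMap.add_apply,
    LinearMap.smul_apply, smul_sub, smul_add, smul_smul, hε.apply_add_right α β γ,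
    hε.apply_add_left α β γ, ← mul_assoc, hε.mul_apply_swap_add]
  linear_combination (norm := module) hbm1z - (ε α γ * ε β γ) • hlsi_f + ε β γ • hbm2x - ε α γ • hbm2y

/-- `C¹(S,M) = Hom(S,M)` with the action `(x·f)(y) = x·f(y) − ε(α,γ)f(x·y) + ε(α,γ)f(x)·y`
and zero right action is an antisymmetric `S`-bimodule: the first bimodule identity
`(x·y)·f − x·(y·f) = ε(α,β)((y·x)·f − y·(x·f))` holds. -/
theorem stmt4 {k Γ S M : Type*} [Field k] [CharZero k] [AddCommGroup Γ]
    [AddCommGroup S] [Module k S] [AddCommGroup M] [Module k M]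
    (ε : Γ → Γ → k) (𝒜 : Γ → Submodule k S) (ℳ : Γ → Submodule k M)
    (mul : S →ₗ[k] S →ₗ[k] S) (l : S →ₗ[k] M →ₗ[k] M) (r : M →ₗ[k] S →ₗ[k] M)
    (hε : IsCommutationFactor ε)
    (hgr : ∀ ⦃α β : Γ⦄ ⦃x y : S⦄, x ∈ 𝒜 α → y ∈ 𝒜 β → mul x y ∈ 𝒜 (α + β))
    (hlsi : ∀ ⦃α β : Γ⦄ ⦃x y : S⦄ (z : S), x ∈ 𝒜 α → y ∈ 𝒜 β →
      mul (mul x y) z - mul x (mul y z) = ε α β • (mul (mul y x) z - mul y (mul x z)))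
    (hdegl : ∀ ⦃α γ : Γ⦄ ⦃x : S⦄ ⦃m : M⦄, x ∈ 𝒜 α → m ∈ ℳ γ → l x m ∈ ℳ (α + γ))
    (hdegr : ∀ ⦃α γ : Γ⦄ ⦃x : S⦄ ⦃m : M⦄, x ∈ 𝒜 α → m ∈ ℳ γ → r m x ∈ ℳ (γ + α))
    (hbm1 : ∀ ⦃α β : Γ⦄ ⦃x y : S⦄ (m : M), x ∈ 𝒜 α → y ∈ 𝒜 β →
      l (mul x y) m - l x (l y m) = ε α β • (l (mul y x) m - l y (l x m)))
    (hbm2 : ∀ ⦃α γ : Γ⦄ ⦃x : S⦄ ⦃m : M⦄ (y : S), x ∈ 𝒜 α → m ∈ ℳ γ →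
      r (l x m) y - l x (r m y) = ε α γ • (r (r m x) y - r m (mul x y)))
    {α β γ : Γ} {x y : S} (hx : x ∈ 𝒜 α) (hy : y ∈ 𝒜 β)
    (f : S →ₗ[k] M) (hf : ∀ ⦃δ : Γ⦄ ⦃s : S⦄, s ∈ 𝒜 δ → f s ∈ ℳ (δ + γ)) :
    ∀ z : S,
      c1Act ε mul l r (α + β) γ (mul x y) ⇑f z -
        c1Act ε mul l r α (β + γ) x (c1Act ε mul l r β γ y ⇑f) z =
      ε α β • (c1Act ε mul l r (α + β) γ (mul y x) ⇑f z -
        c1Act ε mul l r β (α + γ) y (c1Act ε mul l r α γ x ⇑f) z) :=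
  stmt4_general ε 𝒜 ℳ mul l r hε hlsi hbm1 hbm2 hx hy f hf
end

section
/- Let S be the 3-dimensional complex left-symmetric superalgebra with homogeneous basis {x, y₁, y₂}, x even, y₁, y₂ odd, and multiplication x·x = 2x, x·y₁ = y₁, x·y₂ = y₂, y₁·y₂ = x, y₂·y₁ = −x (all other products of basis elements zero). Then S satisfies the left-symmetric superalgebra identity (a·b)·c − a·(b·c) = (−1)^{|a||b|}((b·a)·c − b·(a·c)) for all homogeneous a,b,c, and S is simple (it has no nonzero proper graded two-sided ideals). -/
/-! Both parts are direct computations in coordinates. For the identity, the super-sign is `+1`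
as soon as one of `a, b` is even, so it suffices to check an even `a` against arbitrary `b`
(the case of an even `b` follows by swapping) and two odd elements. As for simplicity, a nonzero
graded ideal contains `x`: either through the even component of one of its elements, or, for an
odd element `v = a y₁ + b y₂`, through `v·y₂ = a x` and `v·y₁ = -b x`. Once `x` is in the ideal,
so is every `w = x·w - w₁ x`. -/

/-- The 3-dimensional complex superalgebra with basis `x = (1,0,0)` (even),
`y₁ = (0,1,0)`, `y₂ = (0,0,1)` (odd) and products
`x·x = 2x, x·y₁ = y₁, x·y₂ = y₂, y₁·y₂ = x, y₂·y₁ = −x` (others zero). -/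
def lsaMul (u v : ℂ × ℂ × ℂ) : ℂ × ℂ × ℂ :=
  (2 * u.1 * v.1 + u.2.1 * v.2.2 - u.2.2 * v.2.1, u.1 * v.2.1, u.1 * v.2.2)

/-- `u` is homogeneous of parity `p` : even elements are multiples of `x`,
odd elements are in the span of `y₁, y₂`. -/
def lsaHomog (p : ZMod 2) (u : ℂ × ℂ × ℂ) : Prop :=
  if p = 0 then u.2.1 = 0 ∧ u.2.2 = 0 else u.1 = 0

section LeftSymmetric

lemma lsaMul_leftSymm_of_even_left {a : ℂ × ℂ × ℂ} (ha : lsaHomog 0 a) (b c : ℂ × ℂ × ℂ) :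
    lsaMul (lsaMul a b) c - lsaMul a (lsaMul b c) =
      lsaMul (lsaMul b a) c - lsaMul b (lsaMul a c) := by
  obtain ⟨h₁, h₂⟩ : a.2.1 = 0 ∧ a.2.2 = 0 := by simpa [lsaHomog] using ha
  simp only [lsaMul, h₁, h₂, Prod.mk_sub_mk, Prod.mk.injEq]
  refine ⟨?_, ?_, ?_⟩ <;> ring

lemma lsaMul_leftSymm_of_even_right (a : ℂ × ℂ × ℂ) {b : ℂ × ℂ × ℂ} (hb : lsaHomog 0 b)
    (c : ℂ × ℂ × ℂ) :
    lsaMul (lsaMul a b) c - lsaMul a (lsaMul b c) =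
      lsaMul (lsaMul b a) c - lsaMul b (lsaMul a c) :=
  (lsaMul_leftSymm_of_even_left hb a c).symm

lemma lsaMul_leftSymm_of_odd {a b : ℂ × ℂ × ℂ} (ha : lsaHomog 1 a) (hb : lsaHomog 1 b)
    (c : ℂ × ℂ × ℂ) :
    lsaMul (lsaMul a b) c - lsaMul a (lsaMul b c) =
      -(lsaMul (lsaMul b a) c - lsaMul b (lsaMul a c)) := by
  have ha₁ : a.1 = 0 := by simpa [lsaHomog] using ha
  have hb₁ : b.1 = 0 := by simpa [lsaHomog] using hb
  simp only [lsaMul, ha₁, hb₁, Prod.mk_sub_mk, Prod.neg_mk, Prod.mk.injEq]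
  refine ⟨?_, ?_, ?_⟩ <;> ring

end LeftSymmetric

section Simplicity

variable {I : Submodule ℂ (ℂ × ℂ × ℂ)}

lemma eq_top_of_lsaX_mem (hmul : ∀ v ∈ I, ∀ s, lsaMul v s ∈ I)
    (hx : ((1, 0, 0) : ℂ × ℂ × ℂ) ∈ I) : I = ⊤ := by
  refine eq_top_iff.mpr fun w _ => ?_
  have hw : lsaMul (1, 0, 0) w - w.1 • ((1, 0, 0) : ℂ × ℂ × ℂ) = w := by
    simp only [lsaMul, Prod.smul_mk, smul_eq_mul, Prod.mk_sub_mk, Prod.ext_iff]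
    refine ⟨?_, ?_, ?_⟩ <;> ring
  exact hw ▸ I.sub_mem (hmul _ hx w) (I.smul_mem _ hx)

lemma lsaX_mem_of_mk_mem {a : ℂ} (ha : a ≠ 0) (h : ((a, 0, 0) : ℂ × ℂ × ℂ) ∈ I) :
    ((1, 0, 0) : ℂ × ℂ × ℂ) ∈ I := by
  rw [← I.smul_mem_iff ha]
  simpa using h

lemma lsaX_mem_of_odd_mem (hmul : ∀ v ∈ I, ∀ s, lsaMul v s ∈ I) {v : ℂ × ℂ × ℂ}
    (hvI : v ∈ I) (hv : v ≠ 0) (hv₁ : v.1 = 0) : ((1, 0, 0) : ℂ × ℂ × ℂ) ∈ I := by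
  by_cases h₂ : v.2.1 = 0
  · have h₃ : -v.2.2 ≠ 0 := neg_ne_zero.mpr fun h₃ => hv (Prod.ext hv₁ (Prod.ext h₂ h₃))
    refine lsaX_mem_of_mk_mem h₃ ?_
    simpa [lsaMul, hv₁] using hmul v hvI (0, 1, 0)
  · refine lsaX_mem_of_mk_mem h₂ ?_
    simpa [lsaMul, hv₁] using hmul v hvI (0, 0, 1)

lemma lsaX_mem_of_ne_bot (hmul : ∀ v ∈ I, ∀ s, lsaMul v s ∈ I)
    (hgr : ∀ v ∈ I, ((v.1, 0, 0) : ℂ × ℂ × ℂ) ∈ I) (hI : I ≠ ⊥) :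
    ((1, 0, 0) : ℂ × ℂ × ℂ) ∈ I := by
  obtain ⟨v, hvI, hv⟩ := Submodule.exists_mem_ne_zero_of_ne_bot hI
  by_cases hv₁ : v.1 = 0
  · exact lsaX_mem_of_odd_mem hmul hvI hv hv₁
  · exact lsaX_mem_of_mk_mem hv₁ (hgr v hvI)

end Simplicity

/-- `S` satisfies the left-symmetric superalgebra identity on homogeneous elements, and
`S` is simple: its multiplication is nonzero and the only graded two-sided ideals
are `0` and `S`. -/
theorem stmt18 :
    (∀ (pa pb : ZMod 2) (a b c : ℂ × ℂ × ℂ), lsaHomog pa a → lsaHomog pb b →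
      lsaMul (lsaMul a b) c - lsaMul a (lsaMul b c) =
        (if pa = 1 ∧ pb = 1 then (-1 : ℂ) else 1) •
          (lsaMul (lsaMul b a) c - lsaMul b (lsaMul a c))) ∧
    (∃ u v : ℂ × ℂ × ℂ, lsaMul u v ≠ 0) ∧
    (∀ I : Submodule ℂ (ℂ × ℂ × ℂ),
      (∀ v ∈ I, ∀ s : ℂ × ℂ × ℂ, lsaMul s v ∈ I ∧ lsaMul v s ∈ I) →
      (∀ v ∈ I, ((v.1, 0, 0) : ℂ × ℂ × ℂ) ∈ I) →
      I = ⊥ ∨ I = ⊤) := by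
  refine ⟨?_, ⟨(1, 0, 0), (1, 0, 0), by simp [lsaMul]⟩, fun I hideal hgr => ?_⟩
  · intro pa pb a b c ha hb
    have hparity : ∀ p : ZMod 2, p = 0 ∨ p = 1 := by decide
    have hne : (0 : ZMod 2) ≠ 1 := by decide
    obtain rfl | rfl := hparity pa <;> obtain rfl | rfl := hparity pb
    · simpa [hne] using lsaMul_leftSymm_of_even_left ha b c
    · simpa [hne] using lsaMul_leftSymm_of_even_left ha b c
    · simpa [hne] using lsaMul_leftSymm_of_even_right a hb c
    · simpa using lsaMul_leftSymm_of_odd ha hb c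
  · have hmul : ∀ v ∈ I, ∀ s, lsaMul v s ∈ I := fun v hv s => (hideal v hv s).2
    by_cases hI : I = ⊥
    · exact Or.inl hI
    · exact Or.inr (eq_top_of_lsaX_mem hmul (lsaX_mem_of_ne_bot hmul hgr hI))
end
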